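/- arXiv:math/0411568 — 9 statements merged into one kernel-verified Lean document; each statement's English description precedes it below -/
import Mathlib

section
/- For any permutation σ in S_n and any monomials, the map σ * x_i^a := x_{σ·i}^a (where i is a k-subset of {1,...,n} listed in increasing order, a is a composition of length k, and σ·i is the image set of i under σ, again listed in increasing order) extends linearly to a well-defined action of the group algebra QS_n on the polynomial ring Q[x_1,...,x_n], i.e. (στ) * m = σ * (τ * m) for all permutations σ, τ and monomials m. -/
/-- Hivert's action on a monomial, encoded by its exponent vector `d : Fin n →₀ M`:
the new exponent vector has support `σ · (support d)` and its values, read along the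
increasing enumeration of the new support, agree with those of `d` read along the
increasing enumeration of the old support. -/
noncomputable def hivMon {n : ℕ} {M : Type*} [Zero M] (σ : Equiv.Perm (Fin n))
    (d : Fin n →₀ M) : Fin n →₀ M :=
  Finsupp.onFinset (d.support.image σ)
    (fun j =>
      if h : j ∈ d.support.image σ then
        d (((d.support.orderIsoOfFin rfl)
            (((d.support.image σ).orderIsoOfFin
                (Finset.card_image_of_injective _ σ.injective)).symm ⟨j, h⟩)).val)
      else 0)
    (fun a ha => by by_contra hc; exact ha (dif_neg hc))

lemma hivMon_apply {n : ℕ} {M : Type*} [Zero M] (σ : Equiv.Perm (Fin n))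
    (d : Fin n →₀ M) (j : Fin n) :
    hivMon σ d j =
      if h : j ∈ d.support.image σ then
        d (((d.support.orderIsoOfFin rfl)
            (((d.support.image σ).orderIsoOfFin
                (Finset.card_image_of_injective _ σ.injective)).symm ⟨j, h⟩)).val)
      else 0 := rfl

lemma hivMon_support {n : ℕ} {M : Type*} [Zero M] (σ : Equiv.Perm (Fin n))
    (d : Fin n →₀ M) : (hivMon σ d).support = d.support.image σ := by
  ext j
  rw [Finsupp.mem_support_iff, hivMon_apply]
  constructor
  · intro h
    by_contra hc
    exact h (dif_neg hc)
  · intro h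
    rw [dif_pos h]
    exact Finsupp.mem_support_iff.mp
      ((d.support.orderIsoOfFin rfl)
        (((d.support.image σ).orderIsoOfFin
          (Finset.card_image_of_injective _ σ.injective)).symm ⟨j, h⟩)).2

lemma orderEmbOfFin_congr {α : Type*} [LinearOrder α] {s t : Finset α} (hst : s = t)
    {c : ℕ} (hs : s.card = c) (ht : t.card = c) (k : Fin c) :
    s.orderEmbOfFin hs k = t.orderEmbOfFin ht k := by subst hst; rfl

lemma hivMon_apply_orderEmbOfFin {n : ℕ} {M : Type*} [Zero M] (σ : Equiv.Perm (Fin n))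
    (d : Fin n →₀ M) {c : ℕ} (h : (d.support.image σ).card = c) (h' : d.support.card = c)
    (k : Fin c) :
    hivMon σ d ((d.support.image σ).orderEmbOfFin h k) = d (d.support.orderEmbOfFin h' k) := by
  subst h'
  have hmem : (d.support.image σ).orderEmbOfFin h k ∈ d.support.image σ :=
    Finset.orderEmbOfFin_mem _ _ _
  rw [hivMon_apply, dif_pos hmem]
  congr 1
  have : (⟨(d.support.image σ).orderEmbOfFin h k, hmem⟩ :
      {x // x ∈ d.support.image σ}) =
      (d.support.image σ).orderIsoOfFin (Finset.card_image_of_injective _ σ.injective) k := by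
    apply Subtype.ext
    simp [Finset.coe_orderIsoOfFin_apply]
  rw [this, OrderIso.symm_apply_apply]
  simp [Finset.coe_orderIsoOfFin_apply]

/-- Hivert's rule `σ * x_i^a := x_{σ·i}^a` defines a genuine action of the group
algebra `ℚ𝕊_n` on `ℚ[x_1,…,x_n]`: on monomials, `(στ) * m = σ * (τ * m)`. -/
theorem hivert_action_well_defined {n : ℕ} (hn : 1 ≤ n)
    (σ τ : Equiv.Perm (Fin n)) (d : Fin n →₀ ℕ) :
    hivMon (σ * τ) d = hivMon σ (hivMon τ d) := by
  have himg : (hivMon τ d).support.image σ = d.support.image (σ * τ) := by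
    rw [hivMon_support, Finset.image_image]
    rfl
  ext j
  by_cases hj : j ∈ d.support.image (σ * τ)
  · obtain ⟨k, hk⟩ : ∃ k : Fin d.support.card,
        (d.support.image (σ * τ)).orderEmbOfFin
          (Finset.card_image_of_injective _ (σ * τ).injective) k = j := by
      have := Finset.range_orderEmbOfFin (d.support.image (σ * τ))
        (Finset.card_image_of_injective _ (σ * τ).injective)
      rw [← Finset.mem_coe, ← this] at hj
      exact hj
    subst hk
    rw [hivMon_apply_orderEmbOfFin (σ * τ) d
      (Finset.card_image_of_injective _ (σ * τ).injective) rfl k]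
    have hc2 : ((hivMon τ d).support.image σ).card = d.support.card := by
      rw [himg]; exact Finset.card_image_of_injective _ (σ * τ).injective
    rw [orderEmbOfFin_congr himg.symm _ hc2 k,
      hivMon_apply_orderEmbOfFin σ (hivMon τ d) hc2
        (by rw [hivMon_support]; exact Finset.card_image_of_injective _ τ.injective) k,
      orderEmbOfFin_congr (hivMon_support τ d) _
        (Finset.card_image_of_injective _ τ.injective) k,
      hivMon_apply_orderEmbOfFin τ d (Finset.card_image_of_injective _ τ.injective) rfl k]
  · have h1 : hivMon (σ * τ) d j = 0 := by
      rw [hivMon_apply, dif_neg hj]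
    have h2 : hivMon σ (hivMon τ d) j = 0 := by
      rw [hivMon_apply, dif_neg (by rw [himg]; exact hj)]
    rw [h1, h2]
end

section
/- For n ≥ 3, the element E = Σ_{σ ∈ S_3} sign(σ) σ (viewed in S_n as permutations fixing 4,...,n) acts as zero under the Hivert-type diagonal action on Q[x_1,...,x_n,y_1,...,y_n]: for every bicomposition exponent 𝔞 and every support set i ⊆ {1,...,n} with |i| = ℓ(𝔞), one has Σ_{σ ∈ S_3} sign(σ) · (σ * (xy)_i^𝔞) = 0. -/
noncomputable def hivAux {n : ℕ} {M : Type*} [Zero M] (d : Fin n →₀ M)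
    (s : Finset (Fin n)) (hs : s.card = d.support.card) : Fin n →₀ M :=
  Finsupp.onFinset s
    (fun j =>
      if h : j ∈ s then
        d (((d.support.orderIsoOfFin rfl) ((s.orderIsoOfFin hs).symm ⟨j, h⟩)).val)
      else 0)
    (fun a ha => by by_contra hc; exact ha (dif_neg hc))

lemma hivMon_eq_aux {n : ℕ} {M : Type*} [Zero M] (σ : Equiv.Perm (Fin n)) (d : Fin n →₀ M) :
    hivMon σ d = hivAux d (d.support.image σ)
      (Finset.card_image_of_injective _ σ.injective) := rfl

lemma hivAux_congr {n : ℕ} {M : Type*} [Zero M] (d : Fin n →₀ M)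
    {s₁ s₂ : Finset (Fin n)} (h : s₁ = s₂) (h₁ : s₁.card = d.support.card)
    (h₂ : s₂.card = d.support.card) : hivAux d s₁ h₁ = hivAux d s₂ h₂ := by
  subst h; rfl

lemma hivMon_congr {n : ℕ} {M : Type*} [Zero M] {σ₁ σ₂ : Equiv.Perm (Fin n)} (d : Fin n →₀ M)
    (h : d.support.image σ₁ = d.support.image σ₂) : hivMon σ₁ d = hivMon σ₂ d := by
  rw [hivMon_eq_aux, hivMon_eq_aux]; exact hivAux_congr d h _ _

open scoped Classical in
/-- For `n ≥ 3`, the signed sum `E_{1,2,3} = Σ_{σ ∈ S_3} sign(σ) σ` (permutations of the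
first three letters, fixing all other points) annihilates every bimonomial `(xy)_i^𝔞`
under Hivert's diagonal action on `ℚ[x,y]` (polynomials encoded as finitely supported
functions on bi-exponent vectors). -/
theorem E123_annihilates {n : ℕ} (hn : 3 ≤ n) (d : Fin n →₀ ℕ × ℕ) :
    ∑ σ : Equiv.Perm (Fin n),
      (if ∀ m : Fin n, 3 ≤ (m : ℕ) → σ m = m then
        (((Equiv.Perm.sign σ : ℤ) : ℚ)) • Finsupp.single (hivMon σ d) (1 : ℚ)
      else 0) = 0 := by
  classical
  obtain ⟨a, b, hiff, hne, ha3, hb3⟩ :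
      ∃ a b : Fin n, (a ∈ d.support ↔ b ∈ d.support) ∧ a ≠ b ∧ (a : ℕ) < 3 ∧ (b : ℕ) < 3 := by
    by_cases h01 : ((⟨0, by omega⟩ : Fin n) ∈ d.support ↔ (⟨1, by omega⟩ : Fin n) ∈ d.support)
    · exact ⟨⟨0, by omega⟩, ⟨1, by omega⟩, h01, by simp [Fin.ext_iff], by simp, by simp⟩
    · by_cases h02 : ((⟨0, by omega⟩ : Fin n) ∈ d.support ↔ (⟨2, by omega⟩ : Fin n) ∈ d.support)
      · exact ⟨⟨0, by omega⟩, ⟨2, by omega⟩, h02, by simp [Fin.ext_iff], by simp, by simp⟩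
      · exact ⟨⟨1, by omega⟩, ⟨2, by omega⟩, by tauto, by simp [Fin.ext_iff], by simp, by simp⟩
  set τ := Equiv.swap a b with hτ
  have hτfix : ∀ m : Fin n, 3 ≤ (m : ℕ) → τ m = m := by
    intro m hm
    apply Equiv.swap_apply_of_ne_of_ne
    · intro h; subst h; omega
    · intro h; subst h; omega
  have hτS : d.support.image τ = d.support := by
    apply Finset.eq_of_subset_of_card_le
    · intro x hx
      simp only [Finset.mem_image] at hx
      obtain ⟨y, hy, rfl⟩ := hx
      rcases eq_or_ne y a with rfl | hya
      · rw [Equiv.swap_apply_left]; exact hiff.mp hy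
      rcases eq_or_ne y b with rfl | hyb
      · rw [Equiv.swap_apply_right]; exact hiff.mpr hy
      · rwa [Equiv.swap_apply_of_ne_of_ne hya hyb]
    · rw [Finset.card_image_of_injective _ τ.injective]
  have key : ∀ σ : Equiv.Perm (Fin n), hivMon (τ.trans σ) d = hivMon σ d := by
    intro σ
    apply hivMon_congr
    have : ⇑(τ.trans σ) = ⇑σ ∘ ⇑τ := rfl
    rw [this, ← Finset.image_image, hτS]
  have hcond : ∀ σ : Equiv.Perm (Fin n),
      (∀ m : Fin n, 3 ≤ (m : ℕ) → (τ.trans σ) m = m) ↔ (∀ m : Fin n, 3 ≤ (m : ℕ) → σ m = m) := by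
    intro σ
    constructor
    · intro h m hm
      have := h m hm
      rwa [Equiv.trans_apply, hτfix m hm] at this
    · intro h m hm
      rw [Equiv.trans_apply, hτfix m hm]; exact h m hm
  have hsign : ∀ σ : Equiv.Perm (Fin n),
      (Equiv.Perm.sign (τ.trans σ) : ℤ) = -(Equiv.Perm.sign σ : ℤ) := by
    intro σ
    have : τ.trans σ = σ * τ := rfl
    rw [this, map_mul, hτ, Equiv.Perm.sign_swap hne]
    push_cast
    ring
  apply Finset.sum_involution (fun σ _ => τ.trans σ)
  · intro σ _
    by_cases hc : ∀ m : Fin n, 3 ≤ (m : ℕ) → σ m = m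
    · rw [if_pos hc, if_pos ((hcond σ).mpr hc), key σ, hsign σ]
      push_cast
      rw [← add_smul]
      ring_nf
      simp
    · rw [if_neg hc, if_neg (fun h => hc ((hcond σ).mp h))]
      simp
  · intro σ _ hne0 heq
    apply hne
    have : (τ.trans σ) a = σ a := by rw [heq]
    rw [Equiv.trans_apply, Equiv.swap_apply_left] at this
    exact (σ.injective this).symm
  · intro σ _; exact Finset.mem_univ _
  · intro σ _
    rw [← Equiv.trans_assoc, Equiv.swap_swap, Equiv.refl_trans]
end

section
/- Fix n ≥ 3 and a subset i ⊆ {1,...,n} such that |i ∩ {1,2,3}| ∈ {1,2}. Then for any subset j of {1,...,n} of the same cardinality as i, the number of permutations σ of {1,2,3} (extended by identity to S_n) with σ·i = j and sign(σ) = +1 equals the number with σ·i = j and sign(σ) = -1. -/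
open scoped Classical in
/-- Fix `n ≥ 3` and `i ⊆ {1,…,n}` with `|i ∩ {1,2,3}| ∈ {1,2}` (here `{1,2,3}` is the
set of the first three letters, 0-indexed as `{0,1,2}`). For any `j` of the same
cardinality as `i`, the number of permutations of the first three letters (fixing all
others) sending `i` to `j` with sign `+1` equals the number with sign `-1`. -/
theorem sign_cancellation {n : ℕ} (hn : 3 ≤ n) (i j : Finset (Fin n))
    (h1 : (i ∩ ({⟨0, by omega⟩, ⟨1, by omega⟩, ⟨2, by omega⟩} : Finset (Fin n))).card = 1 ∨
          (i ∩ ({⟨0, by omega⟩, ⟨1, by omega⟩, ⟨2, by omega⟩} : Finset (Fin n))).card = 2)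
    (hj : j.card = i.card) :
    (Finset.univ.filter (fun σ : Equiv.Perm (Fin n) =>
        (∀ m : Fin n, 3 ≤ (m : ℕ) → σ m = m) ∧ i.image σ = j ∧
          Equiv.Perm.sign σ = 1)).card =
    (Finset.univ.filter (fun σ : Equiv.Perm (Fin n) =>
        (∀ m : Fin n, 3 ≤ (m : ℕ) → σ m = m) ∧ i.image σ = j ∧
          Equiv.Perm.sign σ = -1)).card := by
  classical
  -- Find two distinct letters a b < 3 which are both in i or both out of i.
  obtain ⟨a, b, hab, hiff, ha3, hb3⟩ :
      ∃ a b : Fin n, a ≠ b ∧ (a ∈ i ↔ b ∈ i) ∧ (a : ℕ) < 3 ∧ (b : ℕ) < 3 := by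
    set x0 : Fin n := ⟨0, by omega⟩
    set x1 : Fin n := ⟨1, by omega⟩
    set x2 : Fin n := ⟨2, by omega⟩
    have h01 : x0 ≠ x1 := by simp [x0, x1, Fin.ext_iff]
    have h02 : x0 ≠ x2 := by simp [x0, x2, Fin.ext_iff]
    have h12 : x1 ≠ x2 := by simp [x1, x2, Fin.ext_iff]
    by_cases m0 : x0 ∈ i <;> by_cases m1 : x1 ∈ i <;> by_cases m2 : x2 ∈ i
    · -- all in: contradiction
      exfalso
      have : (i ∩ ({x0, x1, x2} : Finset (Fin n))) = {x0, x1, x2} := by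
        apply Finset.inter_eq_right.mpr
        intro x hx
        simp only [Finset.mem_insert, Finset.mem_singleton] at hx
        rcases hx with rfl | rfl | rfl <;> assumption
      rw [this] at h1
      have hc : ({x0, x1, x2} : Finset (Fin n)).card = 3 := by
        rw [Finset.card_insert_of_notMem (by simp [h01, h02]),
          Finset.card_insert_of_notMem (by simp [h12]), Finset.card_singleton]
      omega
    · exact ⟨x0, x1, h01, by tauto, by simp [x0], by simp [x1]⟩
    · exact ⟨x0, x2, h02, by tauto, by simp [x0], by simp [x2]⟩
    · exact ⟨x1, x2, h12, by tauto, by simp [x1], by simp [x2]⟩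
    · exact ⟨x1, x2, h12, by tauto, by simp [x1], by simp [x2]⟩
    · exact ⟨x0, x2, h02, by tauto, by simp [x0], by simp [x2]⟩
    · exact ⟨x0, x1, h01, by tauto, by simp [x0], by simp [x1]⟩
    · -- all out: contradiction
      exfalso
      have : (i ∩ ({x0, x1, x2} : Finset (Fin n))) = ∅ := by
        apply Finset.eq_empty_iff_forall_notMem.mpr
        intro x hx
        simp only [Finset.mem_inter, Finset.mem_insert, Finset.mem_singleton] at hx
        rcases hx with ⟨hxi, rfl | rfl | rfl⟩ <;> tauto
      rw [this] at h1
      simp at h1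
  set τ : Equiv.Perm (Fin n) := Equiv.swap a b with hτ
  have hτfix : ∀ m : Fin n, 3 ≤ (m : ℕ) → τ m = m := by
    intro m hm
    apply Equiv.swap_apply_of_ne_of_ne
    · intro h; rw [h] at hm; omega
    · intro h; rw [h] at hm; omega
  have hτi : i.image τ = i := by
    apply Finset.eq_of_subset_of_card_le
    · intro x hx
      simp only [Finset.mem_image] at hx
      obtain ⟨y, hy, rfl⟩ := hx
      rcases eq_or_ne y a with rfl | hya
      · rw [hτ, Equiv.swap_apply_left]; exact hiff.mp hy
      rcases eq_or_ne y b with rfl | hyb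
      · rw [hτ, Equiv.swap_apply_right]; exact hiff.mpr hy
      · rwa [hτ, Equiv.swap_apply_of_ne_of_ne hya hyb]
    · rw [Finset.card_image_of_injective _ τ.injective]
  have hτsign : Equiv.Perm.sign τ = -1 := Equiv.Perm.sign_swap hab
  have key : ∀ σ : Equiv.Perm (Fin n),
      ((∀ m : Fin n, 3 ≤ (m : ℕ) → σ m = m) ∧ i.image σ = j) →
      ((∀ m : Fin n, 3 ≤ (m : ℕ) → (σ * τ) m = m) ∧ i.image (σ * τ) = j ∧
        Equiv.Perm.sign (σ * τ) = Equiv.Perm.sign σ * (-1)) := by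
    intro σ ⟨hfix, himg⟩
    refine ⟨fun m hm => ?_, ?_, ?_⟩
    · rw [Equiv.Perm.mul_apply, hτfix m hm, hfix m hm]
    · have : i.image (σ * τ) = (i.image τ).image σ := by
        rw [Finset.image_image]; rfl
      rw [this, hτi, himg]
    · rw [map_mul, hτsign]
  apply Finset.card_bij' (fun σ _ => σ * τ) (fun σ _ => σ * τ)
  · intro σ hσ
    simp only [Finset.mem_filter, Finset.mem_univ, true_and] at hσ ⊢
    obtain ⟨k1, k2, k3⟩ := key σ ⟨hσ.1, hσ.2.1⟩
    exact ⟨k1, k2, by rw [k3, hσ.2.2]; simp⟩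
  · intro σ hσ
    simp only [Finset.mem_filter, Finset.mem_univ, true_and] at hσ ⊢
    obtain ⟨k1, k2, k3⟩ := key σ ⟨hσ.1, hσ.2.1⟩
    exact ⟨k1, k2, by rw [k3, hσ.2.2]; simp⟩
  · intro σ _
    rw [mul_assoc, hτ, Equiv.swap_mul_self, mul_one]
  · intro σ _
    rw [mul_assoc, hτ, Equiv.swap_mul_self, mul_one]
end

section
/- The quasi-shuffle product of bicompositions is associative: for all bicompositions 𝔞, 𝔟, 𝔠, the multiset ⋃_{𝔡 ∈ 𝔞 ⧢̃ 𝔟} 𝔡 ⧢̃ 𝔠 equals the multiset ⋃_{𝔢 ∈ 𝔟 ⧢̃ 𝔠} 𝔞 ⧢̃ 𝔢. -/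
/-- The quasi-shuffle of two bicompositions (lists of pairs), as a multiset. -/
def qshuffle : List (ℕ × ℕ) → List (ℕ × ℕ) → Multiset (List (ℕ × ℕ))
  | a, [] => {a}
  | [], b :: bs => {b :: bs}
  | α :: as, β :: bs =>
      ((qshuffle as (β :: bs)).map (fun c => α :: c)) +
      ((qshuffle (α :: as) bs).map (fun c => β :: c)) +
      ((qshuffle as bs).map (fun c => (α + β) :: c))
termination_by a b => a.length + b.length

lemma qshuffle_nil_right (a : List (ℕ × ℕ)) : qshuffle a [] = {a} := by
  cases a <;> rw [qshuffle]

lemma qshuffle_nil_left (b : List (ℕ × ℕ)) : qshuffle [] b = {b} := by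
  cases b <;> rw [qshuffle]

lemma qshuffle_cons_cons (α β : ℕ × ℕ) (as bs : List (ℕ × ℕ)) :
    qshuffle (α :: as) (β :: bs) =
      ((qshuffle as (β :: bs)).map (fun c => α :: c)) +
      ((qshuffle (α :: as) bs).map (fun c => β :: c)) +
      ((qshuffle as bs).map (fun c => (α + β) :: c)) := by
  rw [qshuffle]

lemma bind_qshuffle_cons_cons (α β : ℕ × ℕ) (as bs : List (ℕ × ℕ))
    (f : List (ℕ × ℕ) → Multiset (List (ℕ × ℕ))) :
    (qshuffle (α :: as) (β :: bs)).bind f =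
      (qshuffle as (β :: bs)).bind (fun d => f (α :: d)) +
      (qshuffle (α :: as) bs).bind (fun d => f (β :: d)) +
      (qshuffle as bs).bind (fun d => f ((α + β) :: d)) := by
  rw [qshuffle_cons_cons]
  simp [Multiset.add_bind, Multiset.bind_map]

theorem qshuffle_assoc_aux : ∀ (a b c : List (ℕ × ℕ)),
    (qshuffle a b).bind (fun d => qshuffle d c) =
      (qshuffle b c).bind (fun e => qshuffle a e)
  | a, b, [] => by
      simp only [qshuffle_nil_right, Multiset.singleton_bind]
      rw [show (fun d => ({d} : Multiset (List (ℕ × ℕ)))) = fun d => {id d} from rfl,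
        Multiset.bind_singleton, Multiset.map_id]
  | a, [], γ :: cs => by
      simp only [qshuffle_nil_right, qshuffle_nil_left, Multiset.singleton_bind]
  | [], β :: bs, γ :: cs => by
      simp only [qshuffle_nil_left, Multiset.singleton_bind]
      rw [show (fun e => ({e} : Multiset (List (ℕ × ℕ)))) = fun e => {id e} from rfl,
        Multiset.bind_singleton, Multiset.map_id]
  | α :: as, β :: bs, γ :: cs => by
      have IH1 := qshuffle_assoc_aux as (β :: bs) (γ :: cs)
      have IH2 := qshuffle_assoc_aux (α :: as) bs (γ :: cs)
      have IH3 := qshuffle_assoc_aux as bs (γ :: cs)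
      have IH4 := qshuffle_assoc_aux (α :: as) (β :: bs) cs
      have IH5 := qshuffle_assoc_aux as (β :: bs) cs
      have IH6 := qshuffle_assoc_aux (α :: as) bs cs
      have IH7 := qshuffle_assoc_aux as bs cs
      have key1 : (qshuffle as (β :: bs)).bind (fun d => qshuffle (α :: d) cs)
          + (qshuffle (α :: as) bs).bind (fun d => qshuffle (β :: d) cs)
          + (qshuffle as bs).bind (fun d => qshuffle ((α + β) :: d) cs)
          = (qshuffle (β :: bs) cs).bind (fun e => qshuffle (α :: as) e) :=
        (bind_qshuffle_cons_cons α β as bs (fun d => qshuffle d cs)).symm.trans IH4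
      have key2 : (qshuffle bs (γ :: cs)).bind (fun e => qshuffle as (β :: e))
          + (qshuffle (β :: bs) cs).bind (fun e => qshuffle as (γ :: e))
          + (qshuffle bs cs).bind (fun e => qshuffle as ((β + γ) :: e))
          = (qshuffle as (β :: bs)).bind (fun d => qshuffle d (γ :: cs)) :=
        (bind_qshuffle_cons_cons β γ bs cs (fun e => qshuffle as e)).symm.trans IH1.symm
      rw [bind_qshuffle_cons_cons α β as bs, bind_qshuffle_cons_cons β γ bs cs]
      simp only [qshuffle_cons_cons, Multiset.bind_add, ← Multiset.map_bind]
      rw [← key1, ← key2, IH2, IH3, IH5, IH6, IH7]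
      simp only [Multiset.map_add, add_assoc]
      abel
termination_by a b c => a.length + b.length + c.length

/-- The quasi-shuffle product of bicompositions is associative: the multiset
obtained by quasi-shuffling each element of (a qsh b) with c equals the multiset
obtained by quasi-shuffling a with each element of (b qsh c). -/
theorem qshuffle_assoc (a b c : List (ℕ × ℕ))
    (ha : ∀ p ∈ a, p ≠ (0, 0)) (hb : ∀ p ∈ b, p ≠ (0, 0)) (hc : ∀ p ∈ c, p ≠ (0, 0)) :
    (qshuffle a b).bind (fun d => qshuffle d c) =
      (qshuffle b c).bind (fun e => qshuffle a e) := by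
  exact qshuffle_assoc_aux a b c
end

section
/- In the ring Q[x_1,...,x_n,y_1,...,y_n] (n variables in each family, possibly infinite), the bimonomial quasi-symmetric functions multiply by the quasi-shuffle rule: M_𝔞 · M_𝔟 = Σ_{𝔠 ∈ 𝔞 ⧢̃ 𝔟} M_𝔠, where M_𝔠 is interpreted as 0 when ℓ(𝔠) > n. -/
/-- The bimonomial quasi-symmetric polynomial M_a in ℚ[x_1,…,x_n,y_1,…,y_n],
where x_i = X (i, false) and y_i = X (i, true): the sum over all subsets
s of {1,…,n} of cardinality the length of a, of the product
x_{i_1}^{a_1} y_{i_1}^{b_1} ⋯ x_{i_k}^{a_k} y_{i_k}^{b_k}, the elements of s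
being listed in increasing order. -/
noncomputable def Mpoly (n : ℕ) (a : List (ℕ × ℕ)) : MvPolynomial (Fin n × Bool) ℚ :=
  ∑ s : Finset (Fin n),
    if h : s.card = a.length then
      ∏ m : Fin a.length,
        MvPolynomial.X (((s.orderIsoOfFin h) m).val, false) ^ (a.get m).1 *
        MvPolynomial.X (((s.orderIsoOfFin h) m).val, true) ^ (a.get m).2
    else 0

open Finset in
noncomputable def term (n : ℕ) (i : Fin n) (p : ℕ × ℕ) : MvPolynomial (Fin n × Bool) ℚ :=
  MvPolynomial.X (i, false) ^ p.1 * MvPolynomial.X (i, true) ^ p.2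

noncomputable def Maux (n : ℕ) : List (ℕ × ℕ) → ℕ → MvPolynomial (Fin n × Bool) ℚ
  | [], _ => 1
  | p :: a, j => ∑ i : Fin n, if j ≤ (i : ℕ) then term n i p * Maux n a ((i : ℕ) + 1) else 0

noncomputable def prodTerm (n : ℕ) (l : List (Fin n)) (a : List (ℕ × ℕ)) :
    MvPolynomial (Fin n × Bool) ℚ := (List.zipWith (term n) l a).prod

lemma zipWith_prod {α β M : Type*} [CommMonoid M] (f : α → β → M) :
    ∀ (l : List α) (a : List β) (h : l.length = a.length),
      (List.zipWith f l a).prod = ∏ m : Fin a.length, f (l.get (Fin.cast h.symm m)) (a.get m)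
  | [], [], _ => by simp
  | x :: l, y :: a, h => by
    simp only [List.zipWith_cons_cons, List.prod_cons, List.length_cons, Fin.prod_univ_succ]
    rw [zipWith_prod f l a (by simpa using h)]
    rfl

lemma term_mul_term (n : ℕ) (i : Fin n) (p q : ℕ × ℕ) :
    term n i p * term n i q = term n i (p + q) := by
  simp only [term, Prod.fst_add, Prod.snd_add, pow_add]
  ring

lemma fin_le_of_succ_le {n : ℕ} {i b : Fin n} (h : (i : ℕ) + 1 ≤ (b : ℕ)) : i ≤ b := by
  rw [Fin.le_def]; omega

lemma Maux_eq_sum (n : ℕ) : ∀ (a : List (ℕ × ℕ)) (j : ℕ),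
    Maux n a j = ∑ s : Finset (Fin n),
      if (s.card = a.length ∧ ∀ i ∈ s, j ≤ (i : ℕ)) then prodTerm n (s.sort (· ≤ ·)) a else 0
  | [], j => by
    rw [Finset.sum_eq_single (∅ : Finset (Fin n))]
    · simp [Maux, prodTerm]
    · intro s _ hs
      rw [if_neg]
      rintro ⟨h0, -⟩
      exact hs (Finset.card_eq_zero.mp (by simpa using h0))
    · simp
  | p :: a, j => by
    have IH := fun (j' : ℕ) => Maux_eq_sum n a j'
    show (∑ i : Fin n, if j ≤ (i : ℕ) then term n i p * Maux n a ((i : ℕ) + 1) else 0) = _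
    have step : ∀ i : Fin n,
        (if j ≤ (i : ℕ) then term n i p * Maux n a ((i : ℕ) + 1) else 0)
        = ∑ s : Finset (Fin n),
            if (j ≤ (i : ℕ) ∧ s.card = a.length ∧ ∀ e ∈ s, (i : ℕ) + 1 ≤ (e : ℕ)) then
              term n i p * prodTerm n (s.sort (· ≤ ·)) a else 0 := by
      intro i
      rw [IH ((i : ℕ) + 1)]
      split_ifs with h
      · rw [Finset.mul_sum]
        refine Finset.sum_congr rfl fun s _ => ?_
        by_cases hc : s.card = a.length ∧ ∀ e ∈ s, (i : ℕ) + 1 ≤ (e : ℕ)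
        · rw [if_pos hc, if_pos ⟨h, hc⟩]
        · rw [if_neg hc, if_neg (by tauto), mul_zero]
      · rw [eq_comm, Finset.sum_eq_zero]
        intro s _
        rw [if_neg (by tauto)]
    rw [Finset.sum_congr rfl fun i _ => step i, ← Finset.sum_product']
    rw [← Finset.sum_filter, ← Finset.sum_filter]
    have hmemQ : ∀ s ∈ Finset.filter
        (fun s : Finset (Fin n) => s.card = (p :: a).length ∧ ∀ i ∈ s, j ≤ (i : ℕ))
        Finset.univ, s.Nonempty := by
      intro s hs
      have h := (Finset.mem_filter.mp hs).2.1
      rw [List.length_cons] at h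
      exact Finset.card_pos.mp (by omega)
    refine Finset.sum_bij' (fun q _ => insert q.1 q.2)
      (fun s hs => (s.min' (hmemQ s hs), s.erase (s.min' (hmemQ s hs)))) ?_ ?_ ?_ ?_ ?_
    · -- hi : insert lands in target filter
      rintro ⟨i, s⟩ hq
      simp only [Finset.mem_filter, Finset.mem_product, Finset.mem_univ, true_and] at hq ⊢
      obtain ⟨hji, hcard, hgt⟩ := hq
      have hnotmem : i ∉ s := fun hmem => by have := hgt i hmem; omega
      refine ⟨?_, ?_⟩
      · rw [Finset.card_insert_of_notMem hnotmem, hcard, List.length_cons]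
      · intro e he
        rcases Finset.mem_insert.mp he with rfl | he
        · exact hji
        · have := hgt e he; omega
    · -- hj : inverse lands in source filter
      intro s hs
      have hne := hmemQ s hs
      simp only [Finset.mem_filter, Finset.mem_product, Finset.mem_univ, true_and, List.length_cons] at hs ⊢
      obtain ⟨hcard, hge⟩ := hs
      refine ⟨hge _ (s.min'_mem hne), ?_, ?_⟩
      · rw [Finset.card_erase_of_mem (s.min'_mem hne), hcard]; rfl
      · intro e he
        have h1 := Finset.min'_lt_of_mem_erase_min' s hne he
        rw [Fin.lt_def] at h1
        omega
    · -- left_inv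
      rintro ⟨i, s⟩ hq
      simp only [Finset.mem_filter, Finset.mem_product, Finset.mem_univ, true_and] at hq
      obtain ⟨hji, hcard, hgt⟩ := hq
      have hnotmem : i ∉ s := fun hmem => by have := hgt i hmem; omega
      have hmin : ∀ (h : (insert i s).Nonempty), (insert i s).min' h = i := by
        intro h
        refine le_antisymm (Finset.min'_le _ _ (Finset.mem_insert_self i s)) ?_
        refine Finset.le_min' _ _ _ fun e he => ?_
        rcases Finset.mem_insert.mp he with rfl | he
        · exact le_refl _
        · exact fin_le_of_succ_le (by have := hgt e he; omega)
      simp only [hmin]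
      rw [Finset.erase_insert hnotmem]
    · -- right_inv
      intro s hs
      have hne := hmemQ s hs
      exact Finset.insert_erase (s.min'_mem hne)
    · -- values
      rintro ⟨i, s⟩ hq
      simp only [Finset.mem_filter, Finset.mem_product, Finset.mem_univ, true_and] at hq
      obtain ⟨hji, hcard, hgt⟩ := hq
      have hnotmem : i ∉ s := fun hmem => by have := hgt i hmem; omega
      have hle : ∀ b ∈ s, i ≤ b := fun b hb =>
        fin_le_of_succ_le (by have := hgt b hb; omega)
      change term n i p * (List.zipWith (term n) (Finset.sort s (· ≤ ·)) a).prod =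
        (List.zipWith (term n) (Finset.sort (insert i s) (· ≤ ·)) (p :: a)).prod
      rw [Finset.sort_insert (· ≤ ·) hle hnotmem, List.zipWith_cons_cons, List.prod_cons]

lemma Mpoly_eq_Maux (n : ℕ) (a : List (ℕ × ℕ)) : Mpoly n a = Maux n a 0 := by
  rw [Maux_eq_sum, Mpoly]
  refine Finset.sum_congr rfl fun s _ => ?_
  by_cases h : s.card = a.length
  · rw [dif_pos h, if_pos ⟨h, fun i _ => Nat.zero_le _⟩, prodTerm,
      zipWith_prod (term n) _ a (by rw [Finset.length_sort, h])]
    refine Finset.prod_congr rfl fun m _ => ?_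
    rfl
  · rw [dif_neg h, if_neg (by tauto)]

lemma multiset_sum_swap {γ R ι : Type*} [AddCommMonoid R] (m : Multiset γ) (s : Finset ι)
    (f : ι → γ → R) :
    ∑ i ∈ s, (m.map (f i)).sum = (m.map (fun c => ∑ i ∈ s, f i c)).sum := by
  induction m using Multiset.induction_on with
  | empty => simp
  | cons a t ih => simp [Finset.sum_add_distrib, ih]

lemma sum_exchange (n : ℕ) (m : Multiset (List (ℕ × ℕ))) (p : ℕ × ℕ) (j : ℕ) :
    ∑ i : Fin n, (if j ≤ (i : ℕ) then
        term n i p * (m.map (fun c => Maux n c ((i : ℕ) + 1))).sum else 0)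
    = (m.map (fun c => Maux n (p :: c) j)).sum := by
  have key : ∀ i : Fin n, (if j ≤ (i : ℕ) then
        term n i p * (m.map (fun c => Maux n c ((i : ℕ) + 1))).sum else 0)
      = (m.map (fun c => if j ≤ (i : ℕ) then term n i p * Maux n c ((i : ℕ) + 1) else 0)).sum := by
    intro i
    split_ifs with h
    · rw [← Multiset.sum_map_mul_left]
    · rw [eq_comm]
      simp
  rw [Finset.sum_congr rfl fun i _ => key i, multiset_sum_swap]
  refine congrArg Multiset.sum (Multiset.map_congr rfl fun c _ => ?_)
  rfl

lemma Maux_cons (n : ℕ) (p : ℕ × ℕ) (a : List (ℕ × ℕ)) (j : ℕ) :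
    Maux n (p :: a) j
      = ∑ i : Fin n, if j ≤ (i : ℕ) then term n i p * Maux n a ((i : ℕ) + 1) else 0 := rfl

theorem Maux_mul (n : ℕ) : ∀ (a b : List (ℕ × ℕ)) (j : ℕ),
    Maux n a j * Maux n b j = ((qshuffle a b).map (fun c => Maux n c j)).sum
  | a, [], j => by
    simp [qshuffle, Maux]
  | [], b :: bs, j => by
    simp only [qshuffle, Multiset.map_singleton, Multiset.sum_singleton]
    show (1 : MvPolynomial (Fin n × Bool) ℚ) * Maux n (b :: bs) j = Maux n (b :: bs) j
    rw [one_mul]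
  | p :: as, q :: bs, j => by
    have IH1 := Maux_mul n as (q :: bs)
    have IH2 := Maux_mul n (p :: as) bs
    have IH3 := Maux_mul n as bs
    rw [Maux_cons n p as j, Maux_cons n q bs j, Finset.sum_mul_sum]
    set f : Fin n → MvPolynomial (Fin n × Bool) ℚ :=
      fun i => if j ≤ (i : ℕ) then term n i p * Maux n as ((i : ℕ) + 1) else 0 with hf
    set g : Fin n → MvPolynomial (Fin n × Bool) ℚ :=
      fun i => if j ≤ (i : ℕ) then term n i q * Maux n bs ((i : ℕ) + 1) else 0 with hg
    have tri : ∀ i i' : Fin n, f i * g i' =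
        (if i < i' then f i * g i' else 0) + (if i' < i then f i * g i' else 0) +
        (if i' = i then f i * g i' else 0) := by
      intro i i'
      rcases lt_trichotomy i i' with h | rfl | h
      · simp [h, asymm h, h.ne']
      · simp
      · simp [h, asymm h, h.ne]
    calc ∑ i : Fin n, ∑ i' : Fin n, f i * g i'
        = (∑ i : Fin n, ∑ i' : Fin n, if i < i' then f i * g i' else 0) +
          (∑ i : Fin n, ∑ i' : Fin n, if i' < i then f i * g i' else 0) +
          (∑ i : Fin n, ∑ i' : Fin n, if i' = i then f i * g i' else 0) := by
          rw [← Finset.sum_add_distrib, ← Finset.sum_add_distrib]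
          refine Finset.sum_congr rfl fun i _ => ?_
          rw [← Finset.sum_add_distrib, ← Finset.sum_add_distrib]
          exact Finset.sum_congr rfl fun i' _ => tri i i'
      _ = ((qshuffle as (q :: bs)).map (fun c => Maux n (p :: c) j)).sum +
          ((qshuffle (p :: as) bs).map (fun c => Maux n (q :: c) j)).sum +
          ((qshuffle as bs).map (fun c => Maux n ((p + q) :: c) j)).sum := by
          congr 1
          · congr 1
            · -- S1 : i < i'
              have inner : ∀ i : Fin n, (∑ i' : Fin n, if i < i' then f i * g i' else 0)
                  = f i * Maux n (q :: bs) ((i : ℕ) + 1) := by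
                intro i
                rw [Maux_cons, Finset.mul_sum]
                refine Finset.sum_congr rfl fun i' _ => ?_
                simp only [hf, hg]
                by_cases hlt : i < i'
                · have h2 : (i : ℕ) + 1 ≤ (i' : ℕ) := by rw [Fin.lt_def] at hlt; omega
                  rw [if_pos hlt, if_pos h2]
                  by_cases hj : j ≤ (i : ℕ)
                  · have h3 : j ≤ (i' : ℕ) := by omega
                    rw [if_pos hj, if_pos h3]
                  · rw [if_neg hj, zero_mul, zero_mul]
                · have h2 : ¬((i : ℕ) + 1 ≤ (i' : ℕ)) := by rw [Fin.lt_def] at hlt; omega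
                  rw [if_neg hlt, if_neg h2, mul_zero]
              rw [Finset.sum_congr rfl fun i _ => inner i]
              have step2 : ∀ i : Fin n, f i * Maux n (q :: bs) ((i : ℕ) + 1)
                  = if j ≤ (i : ℕ) then
                      term n i p * (Maux n as ((i : ℕ) + 1) * Maux n (q :: bs) ((i : ℕ) + 1))
                    else 0 := by
                intro i
                simp only [hf]
                by_cases hj : j ≤ (i : ℕ)
                · rw [if_pos hj, if_pos hj, mul_assoc]
                · rw [if_neg hj, if_neg hj, zero_mul]
              rw [Finset.sum_congr rfl fun i _ => step2 i]
              rw [Finset.sum_congr rfl fun i _ => by rw [IH1 ((i : ℕ) + 1)]]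
              exact sum_exchange n (qshuffle as (q :: bs)) p j
            · -- S2 : i' < i
              rw [Finset.sum_comm]
              have inner : ∀ i' : Fin n, (∑ i : Fin n, if i' < i then f i * g i' else 0)
                  = g i' * Maux n (p :: as) ((i' : ℕ) + 1) := by
                intro i'
                rw [Maux_cons, Finset.mul_sum]
                refine Finset.sum_congr rfl fun i _ => ?_
                simp only [hf, hg]
                by_cases hlt : i' < i
                · have h2 : (i' : ℕ) + 1 ≤ (i : ℕ) := by rw [Fin.lt_def] at hlt; omega
                  rw [if_pos hlt, if_pos h2]
                  by_cases hj : j ≤ (i' : ℕ)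
                  · have h3 : j ≤ (i : ℕ) := by omega
                    rw [if_pos hj, if_pos h3]
                    ring
                  · rw [if_neg hj, mul_zero, zero_mul]
                · have h2 : ¬((i' : ℕ) + 1 ≤ (i : ℕ)) := by rw [Fin.lt_def] at hlt; omega
                  rw [if_neg hlt, if_neg h2, mul_zero]
              rw [Finset.sum_congr rfl fun i' _ => inner i']
              have step2 : ∀ i' : Fin n, g i' * Maux n (p :: as) ((i' : ℕ) + 1)
                  = if j ≤ (i' : ℕ) then
                      term n i' q * (Maux n (p :: as) ((i' : ℕ) + 1) * Maux n bs ((i' : ℕ) + 1))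
                    else 0 := by
                intro i'
                simp only [hg]
                by_cases hj : j ≤ (i' : ℕ)
                · rw [if_pos hj, if_pos hj, mul_assoc]
                  rw [mul_comm (Maux n (p :: as) ((i' : ℕ) + 1)) (Maux n bs ((i' : ℕ) + 1))]
                · rw [if_neg hj, if_neg hj, zero_mul]
              rw [Finset.sum_congr rfl fun i' _ => step2 i']
              rw [Finset.sum_congr rfl fun i' _ => by rw [IH2 ((i' : ℕ) + 1)]]
              exact sum_exchange n (qshuffle (p :: as) bs) q j
          · -- S3 : i' = i
            have h1 : ∀ i : Fin n, (∑ i' : Fin n, if i' = i then f i * g i' else 0)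
                = f i * g i := by
              intro i
              rw [Finset.sum_ite_eq' Finset.univ i (fun i' => f i * g i')]
              simp
            rw [Finset.sum_congr rfl fun i _ => h1 i]
            have h2 : ∀ i : Fin n, f i * g i = if j ≤ (i : ℕ) then
                term n i (p + q) * (Maux n as ((i : ℕ) + 1) * Maux n bs ((i : ℕ) + 1)) else 0 := by
              intro i
              simp only [hf, hg]
              by_cases h : j ≤ (i : ℕ)
              · simp only [if_pos h]
                rw [mul_mul_mul_comm, term_mul_term]
              · simp only [if_neg h, mul_zero]
            rw [Finset.sum_congr rfl fun i _ => h2 i]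
            rw [Finset.sum_congr rfl fun i _ => by rw [IH3 ((i : ℕ) + 1)]]
            exact sum_exchange n (qshuffle as bs) (p + q) j
      _ = ((qshuffle (p :: as) (q :: bs)).map (fun c => Maux n c j)).sum := by
          rw [qshuffle]
          simp only [Multiset.map_add, Multiset.sum_add, Multiset.map_map, Function.comp_def]
termination_by a b _ => a.length + b.length

/-- Bimonomial quasi-symmetric polynomials multiply by the quasi-shuffle rule:
M_a · M_b = Σ_{c ∈ a qsh b} M_c, where M_c = 0 automatically when ℓ(c) > n. -/
theorem Mpoly_mul (n : ℕ) (a b : List (ℕ × ℕ))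
    (ha : ∀ p ∈ a, p ≠ (0, 0)) (hb : ∀ p ∈ b, p ≠ (0, 0)) :
    Mpoly n a * Mpoly n b = ((qshuffle a b).map (Mpoly n)).sum := by
  rw [Mpoly_eq_Maux, Mpoly_eq_Maux, Maux_mul]
  exact congrArg Multiset.sum (Multiset.map_congr rfl fun c _ => (Mpoly_eq_Maux n c).symm)
end

section
/- The cardinality (with multiplicity) of the quasi-shuffle 𝔞 ⧢̃ 𝔟 of bicompositions of lengths k and ℓ equals Σ_{m=0}^{min(k,ℓ)} (k+ℓ-m choose m, k-m, ℓ-m) = Σ_m (k+ℓ-m)!/(m!(k-m)!(ℓ-m)!). -/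
/-- Trinomial coefficient (k+l-m)!/(m!(k-m)!(l-m)!) as a product of binomials. -/
def T (k l m : ℕ) : ℕ := Nat.choose (k + l - m) k * Nat.choose k m

/-- Delannoy-style sum. -/
def S (k l : ℕ) : ℕ := ∑ m ∈ Finset.range (min k l + 1), T k l m

lemma T_vanish (k l m : ℕ) (h : min k l < m) : T k l m = 0 := by
  rcases le_or_gt m k with hk | hk
  · have hl : l < m := by omega
    have : k + l - m < k := by omega
    simp [T, Nat.choose_eq_zero_of_lt this]
  · simp [T, Nat.choose_eq_zero_of_lt hk]

lemma sum_T_eq (k l N : ℕ) (hN : min k l + 1 ≤ N) :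
    ∑ m ∈ Finset.range N, T k l m = S k l := by
  rw [S]
  symm
  apply Finset.sum_subset
  · exact Finset.range_subset_range.mpr hN
  · intro x _ hx
    simp only [Finset.mem_range] at hx
    exact T_vanish k l x (by omega)

lemma T_pascal (k l m : ℕ) (hm : m ≤ k + l) :
    T (k+1) (l+1) (m+1) = T k (l+1) (m+1) + T (k+1) l (m+1) + T k l m := by
  have h1 : k + 1 + (l + 1) - (m + 1) = (k + l - m) + 1 := by omega
  have h2 : k + (l + 1) - (m + 1) = k + l - m := by omega
  have h3 : k + 1 + l - (m + 1) = k + l - m := by omega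
  simp only [T, h1, h2, h3]
  rw [Nat.choose_succ_succ' (k + l - m) k, Nat.choose_succ_succ' k m]
  ring

lemma S_rec (k l : ℕ) : S (k+1) (l+1) = S k (l+1) + S (k+1) l + S k l := by
  have e1 : S (k+1) (l+1) = ∑ m ∈ Finset.range (k+l+2), T (k+1) (l+1) m :=
    (sum_T_eq _ _ _ (by omega)).symm
  rw [e1, Finset.sum_range_succ']
  have e2 : ∀ m ∈ Finset.range (k+l+1),
      T (k+1) (l+1) (m+1) = T k (l+1) (m+1) + T (k+1) l (m+1) + T k l m := by
    intro m hm
    simp only [Finset.mem_range] at hm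
    exact T_pascal k l m (by omega)
  rw [Finset.sum_congr rfl e2]
  simp only [Finset.sum_add_distrib]
  have e0 : T (k+1) (l+1) 0 = T k (l+1) 0 + T (k+1) l 0 := by
    simp only [T, Nat.sub_zero, Nat.choose_zero_right, mul_one]
    have : k + 1 + (l + 1) = (k + (l+1)) + 1 := by omega
    rw [this, Nat.choose_succ_succ (k + (l+1)) k]
    have : k + 1 + l = k + (l + 1) := by omega
    rw [this]
  have eA : S k (l+1) = ∑ m ∈ Finset.range (k+l+1), T k (l+1) (m+1) + T k (l+1) 0 := by
    rw [← sum_T_eq k (l+1) (k+l+2) (by omega)]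
    exact Finset.sum_range_succ' _ _
  have eB : S (k+1) l = ∑ m ∈ Finset.range (k+l+1), T (k+1) l (m+1) + T (k+1) l 0 := by
    rw [← sum_T_eq (k+1) l (k+l+2) (by omega)]
    exact Finset.sum_range_succ' _ _
  have eC : ∑ m ∈ Finset.range (k+l+1), T k l m = S k l :=
    sum_T_eq k l _ (by omega)
  omega

lemma S_zero_right (k : ℕ) : S k 0 = 1 := by
  simp [S, T]

lemma S_zero_left (l : ℕ) : S 0 l = 1 := by
  simp [S, T]

lemma qshuffle_card_eq_S (a b : List (ℕ × ℕ)) :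
    Multiset.card (qshuffle a b) = S a.length b.length := by
  induction a, b using qshuffle.induct with
  | case1 a => simp [qshuffle, S_zero_right]
  | case2 b bs => simp [qshuffle, S_zero_left]
  | case3 α as β bs ih1 ih2 ih3 =>
      rw [qshuffle]
      simp only [Multiset.card_add, Multiset.card_map, ih1, ih2, ih3,
        List.length_cons]
      rw [S_rec]

lemma T_eq_div (k l m : ℕ) (hk : m ≤ k) (hl : m ≤ l) :
    (k + l - m).factorial / (m.factorial * (k - m).factorial * (l - m).factorial)
      = T k l m := by
  have hkk : k ≤ k + l - m := by omega
  have h1 := Nat.choose_mul_factorial_mul_factorial hk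
  have h2 := Nat.choose_mul_factorial_mul_factorial hkk
  have hsub : k + l - m - k = l - m := by omega
  rw [hsub] at h2
  rw [T]
  rw [Nat.div_eq_of_eq_mul_left (by positivity)]
  rw [← h2, ← h1]
  ring

/-- The cardinality (with multiplicity) of the quasi-shuffle of bicompositions of
lengths k and ℓ is Σ_{m=0}^{min(k,ℓ)} (k+ℓ-m)! / (m! (k-m)! (ℓ-m)!). -/
theorem qshuffle_card (a b : List (ℕ × ℕ))
    (ha : ∀ p ∈ a, p ≠ (0, 0)) (hb : ∀ p ∈ b, p ≠ (0, 0)) :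
    Multiset.card (qshuffle a b) =
      ∑ m ∈ Finset.range (min a.length b.length + 1),
        (a.length + b.length - m).factorial /
          (m.factorial * (a.length - m).factorial * (b.length - m).factorial) := by
  rw [qshuffle_card_eq_S, S]
  apply Finset.sum_congr rfl
  intro m hm
  simp only [Finset.mem_range] at hm
  exact (T_eq_div _ _ _ (by omega) (by omega)).symm
end

section
/- The sequence of polynomials defined by Ψ_0(q) = 1 and Ψ_n(q) = Ψ_{n-1}(q) + q^n (n!_q - Ψ_{n-1}(q)) for n ≥ 1, where n!_q = Π_{k=1}^n (1 + q + ... + q^{k-1}), has nonnegative integer coefficients for every n. -/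
open Polynomial in
/-- The q-factorial n!_q = Π_{k=1}^n (1 + q + ⋯ + q^{k-1}), as a polynomial in ℤ[q]. -/
noncomputable def qfac (n : ℕ) : Polynomial ℤ :=
  ∏ k ∈ Finset.range n, ∑ i ∈ Finset.range (k + 1), Polynomial.X ^ i

/-- Ψ_0 = 1, Ψ_n = Ψ_{n-1} + q^n (n!_q - Ψ_{n-1}). -/
noncomputable def psi : ℕ → Polynomial ℤ
  | 0 => 1
  | n + 1 => psi n + Polynomial.X ^ (n + 1) * (qfac (n + 1) - psi n)

open Polynomial

lemma geom_coeff_nonneg (k j : ℕ) :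
    0 ≤ ((∑ i ∈ Finset.range (k + 1), (Polynomial.X : Polynomial ℤ) ^ i)).coeff j := by
  rw [Polynomial.finset_sum_coeff]
  refine Finset.sum_nonneg fun t _ => ?_
  rw [Polynomial.coeff_X_pow]
  split <;> norm_num

lemma qfac_coeff_nonneg (n : ℕ) : ∀ i, 0 ≤ (qfac n).coeff i := by
  induction n with
  | zero =>
      intro i
      simp only [qfac, Finset.range_zero, Finset.prod_empty, Polynomial.coeff_one]
      split <;> norm_num
  | succ n ih =>
      intro i
      rw [show qfac (n+1) = qfac n * ∑ i ∈ Finset.range (n + 1), Polynomial.X ^ i by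
        rw [qfac, qfac, Finset.prod_range_succ]]
      rw [Polynomial.coeff_mul]
      exact Finset.sum_nonneg fun p _ => mul_nonneg (ih p.1) (geom_coeff_nonneg n p.2)

lemma qfac_succ (n : ℕ) :
    qfac (n+1) = qfac n * ∑ i ∈ Finset.range (n + 1), Polynomial.X ^ i := by
  rw [qfac, qfac, Finset.prod_range_succ]

lemma psi_key (n : ℕ) : (∀ i, 0 ≤ (psi n).coeff i) ∧
    (∀ i, (psi n).coeff i ≤ (qfac (n+1)).coeff i) := by
  induction n with
  | zero =>
      constructor
      · intro i
        simp only [psi, Polynomial.coeff_one]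
        split <;> norm_num
      · intro i
        simp [psi, qfac]
  | succ n ih =>
      obtain ⟨h1, h2⟩ := ih
      have hpsi : psi (n+1) = psi n + (qfac (n+1) - psi n) * X ^ (n+1) := by
        show psi n + Polynomial.X ^ (n + 1) * (qfac (n + 1) - psi n) = _
        ring
      have hc : ∀ i, (psi (n+1)).coeff i = (psi n).coeff i +
          (if n+1 ≤ i then (qfac (n+1)).coeff (i-(n+1)) - (psi n).coeff (i-(n+1)) else 0) := by
        intro i
        rw [hpsi, Polynomial.coeff_add, Polynomial.coeff_mul_X_pow']
        split <;> simp
      have hterm : ∀ i, 0 ≤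
          (if n+1 ≤ i then (qfac (n+1)).coeff (i-(n+1)) - (psi n).coeff (i-(n+1)) else 0) := by
        intro i
        split
        · linarith [h2 (i-(n+1))]
        · exact le_refl 0
      constructor
      · intro i
        rw [hc]
        have := hterm i
        linarith [h1 i]
      · intro i
        have hq2 : (qfac (n+2)).coeff i
            = ∑ t ∈ Finset.range (n+2), (qfac (n+1) * X^t).coeff i := by
          rw [qfac_succ (n+1), Finset.mul_sum, Polynomial.finset_sum_coeff]
        have hnn : ∀ t, 0 ≤ (qfac (n+1) * X^t).coeff i := by
          intro t
          rw [Polynomial.coeff_mul_X_pow']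
          split
          · exact qfac_coeff_nonneg (n+1) _
          · exact le_refl 0
        have hsum : ∑ t ∈ Finset.range (n+2), (qfac (n+1) * X^t).coeff i
            = ∑ t ∈ Finset.range (n+1), (qfac (n+1) * X^t).coeff i
              + (qfac (n+1) * X^(n+1)).coeff i := Finset.sum_range_succ _ _
        have h0le : (qfac (n+1) * X^0).coeff i
            ≤ ∑ t ∈ Finset.range (n+1), (qfac (n+1) * X^t).coeff i :=
          Finset.single_le_sum (fun t _ => hnn t) (by simp)
        have hf0 : (qfac (n+1) * X^0).coeff i = (qfac (n+1)).coeff i := by simp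
        have hfn : (qfac (n+1) * X^(n+1)).coeff i
            = if n+1 ≤ i then (qfac (n+1)).coeff (i-(n+1)) else 0 :=
          Polynomial.coeff_mul_X_pow' _ _ _
        rw [hc i, show n+1+1 = n+2 from rfl, hq2, hsum, hfn]
        rw [hf0] at h0le
        split
        · linarith [h2 i, h1 (i-(n+1))]
        · linarith [h2 i]

/-- Each Ψ_n has nonnegative (integer) coefficients. -/
theorem psi_coeff_nonneg (n i : ℕ) : 0 ≤ (psi n).coeff i := by
  exact (psi_key n).1 i
end

section
/- Let Ψ_n(q) be defined by Ψ_0 = 1 and Ψ_n(q) = Ψ_{n-1}(q) + q^n(n!_q - Ψ_{n-1}(q)). Then Ψ_n(q) = n!_q · ((1-q)^{n+1} - q^{n+1})/(1-2q) as rational functions, i.e., (1-2q)Ψ_n(q) = n!_q · ((1-q)^{n+1} - q^{n+1}) as polynomials in Z[q]. -/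
/-- The closed form for Ψ_n: (1-2q) Ψ_n(q) = n!_q ((1-q)^{n+1} - q^{n+1}) in ℤ[q]. -/
theorem psi_closed_form (n : ℕ) :
    (1 - 2 * Polynomial.X) * psi n =
      qfac n * ((1 - Polynomial.X) ^ (n + 1) - Polynomial.X ^ (n + 1)) := by
  induction n with
  | zero => simp [psi, qfac]; ring
  | succ n ih =>
    have hne : (1 - Polynomial.X : Polynomial ℤ) ≠ 0 := by
      intro h
      have := congrArg (fun p => Polynomial.coeff p 0) h
      simp at this
    apply mul_left_cancel₀ hne
    have key : (1 - Polynomial.X) * qfac (n + 1)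
        = qfac n * (1 - Polynomial.X ^ (n + 1)) := by
      rw [qfac, Finset.prod_range_succ, ← qfac]
      have := geom_sum_mul (Polynomial.X : Polynomial ℤ) (n + 1)
      linear_combination -qfac n * this
    show (1 - Polynomial.X) * ((1 - 2 * Polynomial.X) *
        (psi n + Polynomial.X ^ (n + 1) * (qfac (n + 1) - psi n))) = _
    linear_combination ((1 - Polynomial.X) * (1 - Polynomial.X ^ (n + 1))) * ih
      + ((1 - 2 * Polynomial.X) * Polynomial.X ^ (n + 1)
        - ((1 - Polynomial.X) ^ (n + 2) - Polynomial.X ^ (n + 2))) * key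
end

section
/- For the partial order on bicompositions generated by the covering relations 𝔞₁+𝔞₂ < 𝔞 whenever 𝔞 = 𝔞₁·𝔞₂ with both factors nonempty (where 𝔞₁+𝔞₂ merges the last letter of 𝔞₁ with the first letter of 𝔟 by vector addition), every bicomposition 𝔟 of bidegree (d₁,d₂) satisfies: all 𝔞 ≤ 𝔟 have the same bidegree (d₁,d₂), and the transition matrix from {M_𝔞} to the fundamental elements F_𝔟 := Σ_{𝔞 ≤ 𝔟} M_𝔞 is unitriangular, so {F_𝔟 : 𝔟 bicomposition of bidegree (d₁,d₂)} is a linear basis of the bidegree-(d₁,d₂) component of DQSym. -/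
/-- The bidegree of a bicomposition: (sum of first components, sum of second components). -/
def bideg (a : List (ℕ × ℕ)) : ℕ × ℕ := ((a.map Prod.fst).sum, (a.map Prod.snd).sum)

/-- Merge the letters in positions k and k+1 (0-indexed) of a by vector addition.
This realizes the passage from a = a₁·a₂ (with a₁ of length k+1) to a₁+a₂. -/
def mergeAt (a : List (ℕ × ℕ)) (k : ℕ) : List (ℕ × ℕ) :=
  a.take k ++ [a.getD k 0 + a.getD (k + 1) 0] ++ a.drop (k + 2)

/-- One covering step downwards: x is obtained from y by merging two adjacent letters. -/
def bicompStep (y x : List (ℕ × ℕ)) : Prop :=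
  ∃ k, k + 1 < y.length ∧ x = mergeAt y k

/-- The partial order on bicompositions: a ≤ b iff a is obtained from b by a sequence
of merges of adjacent letters. -/
def bicompLE (a b : List (ℕ × ℕ)) : Prop :=
  Relation.ReflTransGen bicompStep b a

/-- The (finite) lower set of b for this order, computed recursively. -/
def downSet (a : List (ℕ × ℕ)) : Finset (List (ℕ × ℕ)) :=
  insert a ((Finset.range (a.length - 1)).attach.biUnion
    (fun k => downSet (mergeAt a k.1)))
termination_by a.length
decreasing_by
  have hk := Finset.mem_range.mp k.2
  simp only [mergeAt, List.length_append, List.length_take, List.length_drop,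
    List.length_singleton]
  omega

/-- The fundamental element F_b = Σ_{a ≤ b} M_a, in coordinates over the bimonomial
basis. -/
noncomputable def Fel (b : List (ℕ × ℕ)) : List (ℕ × ℕ) →₀ ℚ :=
  ∑ a ∈ downSet b, Finsupp.single a 1

lemma mergeAt_decomp (a : List (ℕ × ℕ)) (k : ℕ) (h : k + 1 < a.length) :
    a = a.take k ++ [a.getD k 0, a.getD (k + 1) 0] ++ a.drop (k + 2) := by
  have hk : k < a.length := by omega
  conv_lhs => rw [← List.take_append_drop k a]
  rw [List.drop_eq_getElem_cons hk, List.drop_eq_getElem_cons h,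
    List.getD_eq_getElem a 0 hk, List.getD_eq_getElem a 0 h]
  simp

lemma mergeAt_length (a : List (ℕ × ℕ)) (k : ℕ) (h : k + 1 < a.length) :
    (mergeAt a k).length + 1 = a.length := by
  simp only [mergeAt, List.length_append, List.length_take, List.length_drop,
    List.length_singleton]
  omega

lemma mergeAt_bideg (a : List (ℕ × ℕ)) (k : ℕ) (h : k + 1 < a.length) :
    bideg (mergeAt a k) = bideg a := by
  conv_rhs => rw [mergeAt_decomp a k h]
  simp [bideg, mergeAt, Prod.ext_iff]
  constructor <;> omega

lemma mergeAt_nonzero (a : List (ℕ × ℕ)) (k : ℕ) (h : k + 1 < a.length)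
    (ha : ∀ p ∈ a, p ≠ 0) : ∀ p ∈ mergeAt a k, p ≠ 0 := by
  intro p hp
  simp only [mergeAt, List.mem_append, List.mem_singleton] at hp
  rcases hp with (hp | hp) | hp
  · exact ha p (List.mem_of_mem_take hp)
  · subst hp
    have hk : k < a.length := by omega
    have h1 : a.getD k 0 ≠ 0 := ha _ (by rw [List.getD_eq_getElem a 0 hk]; exact a.getElem_mem hk)
    intro hc
    apply h1
    rw [Prod.ext_iff] at hc ⊢
    simp only [Prod.fst_add, Prod.snd_add, Prod.fst_zero, Prod.snd_zero] at hc ⊢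
    omega
  · exact ha p (List.mem_of_mem_drop hp)

lemma bicompLE_bideg_nonzero {a b : List (ℕ × ℕ)} (hb : ∀ p ∈ b, p ≠ 0)
    (h : bicompLE a b) : (∀ p ∈ a, p ≠ 0) ∧ bideg a = bideg b := by
  induction h with
  | refl => exact ⟨hb, rfl⟩
  | tail _ hstep ih =>
    obtain ⟨k, hk, rfl⟩ := hstep
    exact ⟨mergeAt_nonzero _ k hk ih.1, (mergeAt_bideg _ k hk).trans ih.2⟩

lemma bicompLE_length {a b : List (ℕ × ℕ)} (h : bicompLE a b) :
    a = b ∨ a.length < b.length := by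
  induction h with
  | refl => exact Or.inl rfl
  | tail _ hstep ih =>
    right
    obtain ⟨k, hk, rfl⟩ := hstep
    have := mergeAt_length _ k hk
    rcases ih with rfl | ih <;> omega

lemma mem_downSet_aux : ∀ (n : ℕ) (b : List (ℕ × ℕ)), b.length ≤ n →
    ∀ a, (a ∈ downSet b ↔ bicompLE a b) := by
  intro n
  induction n with
  | zero =>
    intro b hb a
    obtain rfl := List.length_eq_zero_iff.mp (Nat.le_zero.mp hb)
    rw [downSet]
    simp only [List.length_nil, Nat.zero_sub, Finset.range_zero, Finset.attach_empty,
      Finset.biUnion_empty, Finset.mem_insert, Finset.notMem_empty, or_false]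
    constructor
    · rintro (rfl | hmem)
      · exact Relation.ReflTransGen.refl
      · norm_num at hmem
    · intro h
      left
      rcases Relation.ReflTransGen.cases_head h with rfl | ⟨c, hstep, _⟩
      · rfl
      · obtain ⟨k, hk, _⟩ := hstep
        simp at hk
  | succ n ih =>
    intro b hb a
    rw [downSet]
    simp only [Finset.mem_insert, Finset.mem_biUnion, Finset.mem_attach, true_and,
      Subtype.exists, Finset.mem_range]
    constructor
    · rintro (rfl | ⟨k, hk, hmem⟩)
      · exact Relation.ReflTransGen.refl
      · have hk1 : k + 1 < b.length := by omega
        have hlen := mergeAt_length b k hk1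
        have := (ih (mergeAt b k) (by omega) a).mp hmem
        exact Relation.ReflTransGen.head ⟨k, hk1, rfl⟩ this
    · intro h
      rcases Relation.ReflTransGen.cases_head h with rfl | ⟨c, hstep, hle⟩
      · exact Or.inl rfl
      · obtain ⟨k, hk, rfl⟩ := hstep
        have hlen := mergeAt_length b k hk
        exact Or.inr ⟨k, by omega, (ih (mergeAt b k) (by omega) a).mpr hle⟩

lemma mem_downSet (b a : List (ℕ × ℕ)) : a ∈ downSet b ↔ bicompLE a b :=
  mem_downSet_aux b.length b le_rfl a

lemma self_mem_downSet (b : List (ℕ × ℕ)) : b ∈ downSet b :=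
  (mem_downSet b b).mpr Relation.ReflTransGen.refl

lemma Fel_apply (b x : List (ℕ × ℕ)) :
    Fel b x = if x ∈ downSet b then 1 else 0 := by
  rw [Fel, Finset.sum_apply']
  simp only [Finsupp.single_apply]
  rw [Finset.sum_ite_eq' (downSet b) x (fun _ => (1 : ℚ))]

lemma Fel_eq (b : List (ℕ × ℕ)) :
    Fel b = Finsupp.single b 1 + ∑ a ∈ (downSet b).erase b, Finsupp.single a 1 := by
  rw [Fel, ← Finset.add_sum_erase _ _ (self_mem_downSet b)]

lemma single_mem_span (d : ℕ × ℕ) :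
    ∀ (n : ℕ) (l : List (ℕ × ℕ)), l.length ≤ n → (∀ p ∈ l, p ≠ 0) → bideg l = d →
    Finsupp.single l (1 : ℚ) ∈ Submodule.span ℚ
      (Set.range (fun b : {l : List (ℕ × ℕ) // (∀ p ∈ l, p ≠ 0) ∧ bideg l = d} =>
        Fel b.1)) := by
  intro n
  induction n with
  | zero =>
    intro l hl hnz hd
    obtain rfl := List.length_eq_zero_iff.mp (Nat.le_zero.mp hl)
    have : Finsupp.single ([] : List (ℕ × ℕ)) (1 : ℚ) = Fel [] := by
      rw [Fel_eq]
      have : (downSet ([] : List (ℕ × ℕ))).erase [] = ∅ := by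
        rw [Finset.eq_empty_iff_forall_notMem]
        intro a ha
        obtain ⟨hne, hmem⟩ := Finset.mem_erase.mp ha
        rcases bicompLE_length ((mem_downSet _ _).mp hmem) with rfl | hlt
        · exact hne rfl
        · simp at hlt
      rw [this, Finset.sum_empty, add_zero]
    rw [this]
    exact Submodule.subset_span ⟨⟨[], hnz, hd⟩, rfl⟩
  | succ n ih =>
    intro l hl hnz hd
    have key : Finsupp.single l (1 : ℚ) =
        Fel l - ∑ a ∈ (downSet l).erase l, Finsupp.single a 1 := by
      rw [Fel_eq]; abel
    rw [key]
    apply Submodule.sub_mem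
    · exact Submodule.subset_span ⟨⟨l, hnz, hd⟩, rfl⟩
    · apply Submodule.sum_mem
      intro a ha
      obtain ⟨hne, hmem⟩ := Finset.mem_erase.mp ha
      have hle := (mem_downSet _ _).mp hmem
      obtain ⟨hanz, habd⟩ := bicompLE_bideg_nonzero hnz hle
      rcases bicompLE_length hle with rfl | hlt
      · exact absurd rfl hne
      · exact ih a (by omega) hanz (habd.trans hd)

/-- For the merge order on bicompositions: every a ≤ b is again a bicomposition, of
the same bidegree as b; the lower set of b is the (finite) set downSet b, so F_b is
the sum of M_a over a ≤ b — a unitriangular expression, having coefficient 1 on M_b and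
supported on elements ≤ b; and the family {F_b : b a bicomposition of bidegree d} is a
linear basis of the bidegree-d component of DQSym (it is linearly independent and spans
the same subspace as the bimonomial basis elements M_b of bidegree d). -/
theorem fundamental_basis (d : ℕ × ℕ) :
    (∀ a b : List (ℕ × ℕ), (∀ p ∈ b, p ≠ 0) → bicompLE a b →
      ((∀ p ∈ a, p ≠ 0) ∧ bideg a = bideg b)) ∧
    (∀ a b : List (ℕ × ℕ), a ∈ downSet b ↔ bicompLE a b) ∧
    LinearIndependent ℚ
      (fun b : {l : List (ℕ × ℕ) // (∀ p ∈ l, p ≠ 0) ∧ bideg l = d} => Fel b.1) ∧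
    Submodule.span ℚ
        (Set.range (fun b : {l : List (ℕ × ℕ) // (∀ p ∈ l, p ≠ 0) ∧ bideg l = d} =>
          Fel b.1)) =
      Submodule.span ℚ
        (Set.range (fun b : {l : List (ℕ × ℕ) // (∀ p ∈ l, p ≠ 0) ∧ bideg l = d} =>
          Finsupp.single b.1 (1 : ℚ))) := by
  refine ⟨fun a b hb h => bicompLE_bideg_nonzero hb h,
    fun a b => mem_downSet b a, ?_, ?_⟩
  · rw [linearIndependent_iff']
    intro s g hsum i hi
    by_contra hgi
    set t := s.filter (fun j => g j ≠ 0) with ht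
    have htne : t.Nonempty := ⟨i, Finset.mem_filter.mpr ⟨hi, hgi⟩⟩
    obtain ⟨b0, hb0t, hmax⟩ := t.exists_max_image (fun j => j.1.length) htne
    obtain ⟨hb0s, hgb0⟩ := Finset.mem_filter.mp hb0t
    have heval : ∑ j ∈ s, g j * Fel j.1 b0.1 = 0 := by
      have := congrArg (fun f => f b0.1) hsum
      simpa [Finsupp.smul_apply] using this
    have hzero : ∀ j ∈ s, j ≠ b0 → g j * Fel j.1 b0.1 = 0 := by
      intro j hj hne
      by_cases hgj : g j = 0
      · simp [hgj]
      · rw [Fel_apply]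
        split_ifs with hmem
        · exfalso
          have hle := (mem_downSet _ _).mp hmem
          rcases bicompLE_length hle with heq | hlt
          · exact hne (Subtype.ext heq.symm)
          · have := hmax j (Finset.mem_filter.mpr ⟨hj, hgj⟩)
            omega
        · ring
    rw [Finset.sum_eq_single b0 hzero (fun h => absurd hb0s h)] at heval
    rw [Fel_apply, if_pos (self_mem_downSet _)] at heval
    simp at heval
    exact hgb0 heval
  · apply le_antisymm
    · rw [Submodule.span_le]
      rintro x ⟨b, rfl⟩
      rw [SetLike.mem_coe]
      show (∑ a ∈ downSet b.1, Finsupp.single a (1 : ℚ)) ∈ _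
      apply Submodule.sum_mem
      intro a ha
      have hle := (mem_downSet _ _).mp ha
      obtain ⟨hanz, habd⟩ := bicompLE_bideg_nonzero b.2.1 hle
      exact Submodule.subset_span ⟨⟨a, hanz, habd.trans b.2.2⟩, rfl⟩
    · rw [Submodule.span_le]
      rintro x ⟨b, rfl⟩
      exact single_mem_span d b.1.length b.1 le_rfl b.2.1 b.2.2
end
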